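/- Let M be a model category with pushouts and pullbacks, and let J be the 'walking span' category with three objects a, b, c and exactly two non-identity morphisms b → a and b → c. Then Fun(J, M) admits a model category structure in which a map f : (X_a ← X_b → X_c) ⟶ (Y_a ← Y_b → Y_c) is: a weak equivalence iff f_a, f_b, f_c are weak equivalences in M; a cofibration iff f_a and f_b are cofibrations and the corner map X_c ⊔_{X_b} Y_b → Y_c is a cofibration; and a fibration iff f_a and f_c are fibrations and the induced map X_b → X_a ×_{Y_a} Y_b is a fibration. Moreover, in this model structure an object (X_a ← X_b → X_c) is cofibrant if and only if X_a and X_b are cofibrant and X_b → X_c is a cofibration; and the constant-diagram functor const : M ⥤ Fun(J, M) preserves fibrations and trivial fibrations, so that (when M has pushouts, hence J-shaped colimits) the adjunction colim : Fun(J, M) ⇄ M : const is a Quillen adjunction. (The 'Reedy trick' presenting homotopy pushouts.) -/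

import Mathlib

open CategoryTheory Limits

universe w v u

namespace Paper

/-- `f` is a retract of `g` in the arrow category. -/
def IsRetract {M : Type u} [Category.{v} M] {a b x y : M} (f : a ⟶ b) (g : x ⟶ y) : Prop :=
  ∃ (i : a ⟶ x) (r : x ⟶ a) (i' : b ⟶ y) (r' : y ⟶ b),
    i ≫ r = 𝟙 a ∧ i' ≫ r' = 𝟙 b ∧ i ≫ g = f ≫ i' ∧ g ≫ r' = r ≫ f

/-- A (Quillen) model structure on a category `M`: classes of weak equivalences,
cofibrations and fibrations, containing all isomorphisms, with the two-out-of-three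
property for weak equivalences, all three classes closed under retracts, the lifting
axioms, and the two factorization axioms. -/
structure ModelStructure (M : Type u) [Category.{v} M] where
  W : MorphismProperty M
  Cof : MorphismProperty M
  Fib : MorphismProperty M
  iso_W : MorphismProperty.isomorphisms M ≤ W
  iso_Cof : MorphismProperty.isomorphisms M ≤ Cof
  iso_Fib : MorphismProperty.isomorphisms M ≤ Fib
  two_of_three : W.HasTwoOutOfThreeProperty
  retract_W : ∀ {a b x y : M} (f : a ⟶ b) (g : x ⟶ y), IsRetract f g → W g → W f
  retract_Cof : ∀ {a b x y : M} (f : a ⟶ b) (g : x ⟶ y), IsRetract f g → Cof g → Cof f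
  retract_Fib : ∀ {a b x y : M} (f : a ⟶ b) (g : x ⟶ y), IsRetract f g → Fib g → Fib f
  lift_Cof_trivFib : ∀ {a b x y : M} (i : a ⟶ b) (p : x ⟶ y),
    Cof i → W p → Fib p → HasLiftingProperty i p
  lift_trivCof_Fib : ∀ {a b x y : M} (i : a ⟶ b) (p : x ⟶ y),
    Cof i → W i → Fib p → HasLiftingProperty i p
  fact_Cof_trivFib : ∀ {x y : M} (f : x ⟶ y),
    ∃ (z : M) (i : x ⟶ z) (p : z ⟶ y), Cof i ∧ W p ∧ Fib p ∧ i ≫ p = f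
  fact_trivCof_Fib : ∀ {x y : M} (f : x ⟶ y),
    ∃ (z : M) (i : x ⟶ z) (p : z ⟶ y), Cof i ∧ W i ∧ Fib p ∧ i ≫ p = f

variable {M : Type u} [Category.{v} M]

/-- An object is cofibrant if the map from the initial object to it is a cofibration. -/
def ModelStructure.Cofibrant [HasInitial M] (S : ModelStructure M) (x : M) : Prop :=
  S.Cof (initial.to x)

/-- An object is fibrant if the map from it to the terminal object is a fibration. -/
def ModelStructure.Fibrant [HasTerminal M] (S : ModelStructure M) (x : M) : Prop :=
  S.Fib (terminal.from x)

end Paper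

namespace Paper

variable {M : Type u} [Category.{v} M]

/-- For a map `f : X ⟶ Y` of span-shaped diagrams, the corner map
`X_c ⊔_{X_b} Y_b ⟶ Y_c` (where `b` is the central object and `b → c` the right leg). -/
noncomputable def spanCofCorner [HasPushouts M] {X Y : WalkingSpan ⥤ M} (f : X ⟶ Y) :
    pushout (X.map WalkingSpan.Hom.snd) (f.app WalkingSpan.zero) ⟶
      Y.obj WalkingSpan.right :=
  pushout.desc (f.app WalkingSpan.right) (Y.map WalkingSpan.Hom.snd)
    (f.naturality WalkingSpan.Hom.snd)

/-- For a map `f : X ⟶ Y` of span-shaped diagrams, the induced map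
`X_b ⟶ X_a ×_{Y_a} Y_b` (where `b` is the central object and `b → a` the left leg). -/
noncomputable def spanFibCorner [HasPullbacks M] {X Y : WalkingSpan ⥤ M} (f : X ⟶ Y) :
    X.obj WalkingSpan.zero ⟶
      pullback (f.app WalkingSpan.left) (Y.map WalkingSpan.Hom.fst) :=
  pullback.lift (X.map WalkingSpan.Hom.fst) (f.app WalkingSpan.zero)
    (f.naturality WalkingSpan.Hom.fst)

end Paper

/-! In the Reedy order `a < b < c` of the walking span, the latching object of `c` is
`X_c ⊔_{X_b} Y_b` and the matching object of `b` is `X_a ×_{Y_a} Y_b`, so lifting problems and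
factorizations in `Fun(J, M)` are solved one object at a time: at `a` directly, at `b` against
the pullback corner, and at `c` out of the pushout corner. Both corners are functorial, so the
Reedy classes are closed under retracts. By two-out-of-three and (co)base change, a Reedy
(co)fibration is trivial in the Reedy sense iff it is a levelwise weak equivalence. The
pullback corner of a constant map is an isomorphism, so `const` sends (trivial) fibrations to
Reedy (trivial) fibrations, and `colim ⊣ const` transposes the lifting problems. -/

attribute [local simp] pushout.inl_desc pushout.inr_desc pushout.inl_desc_assoc
  pushout.inr_desc_assoc pullback.lift_fst pullback.lift_snd pullback.lift_fst_assoc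
  pullback.lift_snd_assoc

namespace Paper

open MorphismProperty Limits.WalkingSpan

variable {M : Type u} [Category.{v} M]

lemma isRetract_iff_nonempty_retractArrow {a b x y : M} (f : a ⟶ b) (g : x ⟶ y) :
    IsRetract f g ↔ Nonempty (RetractArrow f g) := by
  constructor
  · rintro ⟨i, r, i', r', hi, hi', wi, wr⟩
    exact ⟨{ i := Arrow.homMk i i' wi, r := Arrow.homMk r r' wr.symm,
             retract := by ext <;> simp [hi, hi'] }⟩
  · rintro ⟨h⟩
    exact ⟨h.i.left, h.r.left, h.i.right, h.r.right, h.retract_left, h.retract_right, h.i_w,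
      h.r_w.symm⟩

lemma isStableUnderRetracts_of_isRetract {P : MorphismProperty M}
    (hP : ∀ {a b x y : M} (f : a ⟶ b) (g : x ⟶ y), IsRetract f g → P g → P f) :
    P.IsStableUnderRetracts :=
  ⟨fun h hg => hP _ _ ((isRetract_iff_nonempty_retractArrow _ _).2 ⟨h⟩) hg⟩

lemma of_isRetract (P : MorphismProperty M) [P.IsStableUnderRetracts]
    {a b x y : M} (f : a ⟶ b) (g : x ⟶ y) (h : IsRetract f g) (hg : P g) : P f :=
  P.of_retract ((isRetract_iff_nonempty_retractArrow f g).1 h).some hg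

namespace ModelStructure

variable (S : ModelStructure M)

abbrev trivialCofibrations : MorphismProperty M := S.Cof ⊓ S.W

abbrev trivialFibrations : MorphismProperty M := S.Fib ⊓ S.W

instance : S.W.HasTwoOutOfThreeProperty := S.two_of_three

instance : S.W.IsStableUnderRetracts := isStableUnderRetracts_of_isRetract S.retract_W
instance : S.Cof.IsStableUnderRetracts := isStableUnderRetracts_of_isRetract S.retract_Cof
instance : S.Fib.IsStableUnderRetracts := isStableUnderRetracts_of_isRetract S.retract_Fib

instance : S.W.ContainsIdentities := ⟨fun _ => S.iso_W _ (isomorphisms.infer_property _)⟩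
instance : S.Cof.ContainsIdentities := ⟨fun _ => S.iso_Cof _ (isomorphisms.infer_property _)⟩
instance : S.Fib.ContainsIdentities := ⟨fun _ => S.iso_Fib _ (isomorphisms.infer_property _)⟩

instance : HasFactorization S.Cof S.trivialFibrations where
  nonempty_mapFactorizationData f := by
    obtain ⟨_, i, p, hi, hpW, hpF, fac⟩ := S.fact_Cof_trivFib f
    exact ⟨{ Z := _, i := i, p := p, fac := fac, hi := hi, hp := ⟨hpF, hpW⟩ }⟩

instance : HasFactorization S.trivialCofibrations S.Fib where
  nonempty_mapFactorizationData f := by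
    obtain ⟨_, i, p, hiC, hiW, hp, fac⟩ := S.fact_trivCof_Fib f
    exact ⟨{ Z := _, i := i, p := p, fac := fac, hi := ⟨hiC, hiW⟩, hp := hp }⟩

lemma cof_le_llp_trivialFibrations : S.Cof ≤ S.trivialFibrations.llp :=
  fun _ _ i hi _ _ p hp => S.lift_Cof_trivFib i p hi hp.2 hp.1

lemma trivialCofibrations_le_llp_fib : S.trivialCofibrations ≤ S.Fib.llp :=
  fun _ _ i hi _ _ p hp => S.lift_trivCof_Fib i p hi.1 hi.2 hp

lemma llp_trivialFibrations : S.trivialFibrations.llp = S.Cof :=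
  llp_eq_of_le_llp_of_hasFactorization_of_isStableUnderRetracts S.cof_le_llp_trivialFibrations

lemma llp_fib : S.Fib.llp = S.trivialCofibrations :=
  llp_eq_of_le_llp_of_hasFactorization_of_isStableUnderRetracts
    S.trivialCofibrations_le_llp_fib

lemma rlp_cof : S.Cof.rlp = S.trivialFibrations :=
  rlp_eq_of_le_rlp_of_hasFactorization_of_isStableUnderRetracts
    ((le_llp_iff_le_rlp _ _).1 S.cof_le_llp_trivialFibrations)

instance : S.trivialCofibrations.IsStableUnderComposition := S.llp_fib ▸ inferInstance
instance : S.trivialCofibrations.IsStableUnderCobaseChange := S.llp_fib ▸ inferInstance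
instance : S.trivialFibrations.IsStableUnderComposition := S.rlp_cof ▸ inferInstance
instance : S.trivialFibrations.IsStableUnderBaseChange := S.rlp_cof ▸ inferInstance

end ModelStructure

section

variable [HasPushouts M] {X Y : WalkingSpan ⥤ M}

lemma inl_spanCofCorner (f : X ⟶ Y) :
    pushout.inl _ _ ≫ spanCofCorner f = f.app right :=
  pushout.inl_desc _ _ _

lemma inr_spanCofCorner (f : X ⟶ Y) :
    pushout.inr _ _ ≫ spanCofCorner f = Y.map Hom.snd :=
  pushout.inr_desc _ _ _

lemma spanCofCorner_naturality {X' Y' : WalkingSpan ⥤ M} {f : X ⟶ Y} {g : X' ⟶ Y'}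
    (α : X ⟶ X') (β : Y ⟶ Y') (w : α ≫ g = f ≫ β) :
    pushout.map _ _ _ _ (α.app right) (β.app zero) (α.app zero) (α.naturality Hom.snd)
      (NatTrans.congr_app w zero).symm ≫ spanCofCorner g = spanCofCorner f ≫ β.app right := by
  apply pushout.hom_ext
  · simpa [spanCofCorner] using NatTrans.congr_app w right
  · simp [spanCofCorner]

noncomputable def cofCornerFunctor : Arrow (WalkingSpan ⥤ M) ⥤ Arrow M where
  obj f := Arrow.mk (spanCofCorner f.hom)
  map φ := Arrow.homMk _ _ (spanCofCorner_naturality φ.left φ.right φ.w)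

lemma isIso_spanCofCorner_id (X : WalkingSpan ⥤ M) : IsIso (spanCofCorner (𝟙 X)) := by
  have : IsIso (pushout.inl _ _ ≫ spanCofCorner (𝟙 X)) := by
    rw [inl_spanCofCorner, NatTrans.id_app]
    infer_instance
  exact IsIso.of_isIso_comp_left (pushout.inl _ _) _

end

section

variable [HasPullbacks M] {X Y : WalkingSpan ⥤ M}

lemma spanFibCorner_fst (f : X ⟶ Y) :
    spanFibCorner f ≫ pullback.fst _ _ = X.map Hom.fst :=
  pullback.lift_fst _ _ _

lemma spanFibCorner_snd (f : X ⟶ Y) :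
    spanFibCorner f ≫ pullback.snd _ _ = f.app zero :=
  pullback.lift_snd _ _ _

lemma spanFibCorner_naturality {X' Y' : WalkingSpan ⥤ M} {f : X ⟶ Y} {g : X' ⟶ Y'}
    (α : X ⟶ X') (β : Y ⟶ Y') (w : α ≫ g = f ≫ β) :
    α.app zero ≫ spanFibCorner g = spanFibCorner f ≫
      pullback.map _ _ _ _ (α.app left) (β.app zero) (β.app left)
        (NatTrans.congr_app w left).symm (β.naturality Hom.fst) := by
  apply pullback.hom_ext
  · simp [spanFibCorner]
  · simpa [spanFibCorner] using NatTrans.congr_app w zero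

noncomputable def fibCornerFunctor : Arrow (WalkingSpan ⥤ M) ⥤ Arrow M where
  obj f := Arrow.mk (spanFibCorner f.hom)
  map φ := Arrow.homMk _ _ (spanFibCorner_naturality φ.left φ.right φ.w)

lemma isIso_spanFibCorner_id (X : WalkingSpan ⥤ M) : IsIso (spanFibCorner (𝟙 X)) := by
  have : IsIso (spanFibCorner (𝟙 X) ≫ pullback.snd _ _) := by
    rw [spanFibCorner_snd, NatTrans.id_app]
    infer_instance
  exact IsIso.of_isIso_comp_right _ (pullback.snd _ _)

lemma isIso_spanFibCorner_const_map {x y : M} (p : x ⟶ y) :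
    IsIso (spanFibCorner ((Functor.const WalkingSpan).map p)) := by
  have : IsIso (((Functor.const WalkingSpan).obj y).map Hom.fst) := by
    dsimp
    infer_instance
  have : IsIso (spanFibCorner ((Functor.const WalkingSpan).map p) ≫ pullback.fst _ _) := by
    rw [spanFibCorner_fst]
    dsimp
    infer_instance
  exact IsIso.of_isIso_comp_right _ (pullback.fst _ _)

end

end Paper

namespace CategoryTheory.MorphismProperty

open Paper Limits.WalkingSpan

variable {M : Type u} [Category.{v} M] (P : MorphismProperty M)

instance functorCategory_containsIdentities [P.ContainsIdentities] (J : Type*) [Category J] :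
    (P.functorCategory J).ContainsIdentities :=
  ⟨fun _ _ => P.id_mem _⟩

instance functorCategory_hasTwoOutOfThreeProperty [P.HasTwoOutOfThreeProperty] (J : Type*)
    [Category J] : (P.functorCategory J).HasTwoOutOfThreeProperty where
  comp_mem _ _ hf hg j := P.comp_mem _ _ (hf j) (hg j)
  of_postcomp f g hg hfg j := P.of_postcomp (f.app j) (g.app j) (hg j) (hfg j)
  of_precomp f g hf hfg j := P.of_precomp (f.app j) (g.app j) (hf j) (hfg j)

def spanReedyCof [HasPushouts M] : MorphismProperty (WalkingSpan ⥤ M) :=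
  fun _ _ f => P (f.app left) ∧ P (f.app zero) ∧ P (spanCofCorner f)

def spanReedyFib [HasPullbacks M] : MorphismProperty (WalkingSpan ⥤ M) :=
  fun _ _ f => P (f.app left) ∧ P (f.app right) ∧ P (spanFibCorner f)

instance [HasPushouts M] [P.IsStableUnderRetracts] : P.spanReedyCof.IsStableUnderRetracts where
  of_retract h hg :=
    ⟨P.of_retract (h.map ((evaluation _ _).obj left)) hg.1,
      P.of_retract (h.map ((evaluation _ _).obj zero)) hg.2.1,
      P.of_retract (Retract.map h cofCornerFunctor) hg.2.2⟩

instance [HasPullbacks M] [P.IsStableUnderRetracts] : P.spanReedyFib.IsStableUnderRetracts where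
  of_retract h hg :=
    ⟨P.of_retract (h.map ((evaluation _ _).obj left)) hg.1,
      P.of_retract (h.map ((evaluation _ _).obj right)) hg.2.1,
      P.of_retract (Retract.map h fibCornerFunctor) hg.2.2⟩

instance [HasPushouts M] [P.ContainsIdentities] [P.RespectsIso] :
    P.spanReedyCof.ContainsIdentities :=
  ⟨fun X => ⟨P.id_mem _, P.id_mem _, have := isIso_spanCofCorner_id X; P.of_isIso _⟩⟩

instance [HasPullbacks M] [P.ContainsIdentities] [P.RespectsIso] :
    P.spanReedyFib.ContainsIdentities :=
  ⟨fun X => ⟨P.id_mem _, P.id_mem _, have := isIso_spanFibCorner_id X; P.of_isIso _⟩⟩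

end CategoryTheory.MorphismProperty

namespace Paper

open Limits.WalkingSpan MorphismProperty

variable {M : Type u} [Category.{v} M]

section

variable {A B X Y : WalkingSpan ⥤ M} {i : A ⟶ B} {p : X ⟶ Y} {u : A ⟶ X} {v : B ⟶ Y}

lemma exists_lift_app_zero [HasPullbacks M] (sq : CommSq u i p v)
    [HasLiftingProperty (i.app zero) (spanFibCorner p)] {la : B.obj left ⟶ X.obj left}
    (hla₁ : i.app left ≫ la = u.app left) (hla₂ : la ≫ p.app left = v.app left) :
    ∃ lb, i.app zero ≫ lb = u.app zero ∧ lb ≫ p.app zero = v.app zero ∧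
      lb ≫ X.map Hom.fst = B.map Hom.fst ≫ la := by
  have sq' : CommSq (u.app zero) (i.app zero) (spanFibCorner p)
      (pullback.lift (B.map Hom.fst ≫ la) (v.app zero) (by simp [hla₂])) := ⟨by
    apply pullback.hom_ext
    · simp only [spanFibCorner_fst, pullback.lift_fst, Category.assoc]
      rw [← NatTrans.naturality, ← hla₁, NatTrans.naturality_assoc]
    · simpa [spanFibCorner] using NatTrans.congr_app sq.w zero⟩
  exact ⟨sq'.lift, sq'.fac_left,
    by simpa only [Category.assoc, spanFibCorner_snd, pullback.lift_snd]
      using sq'.fac_right =≫ pullback.snd _ _,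
    by simpa only [Category.assoc, spanFibCorner_fst, pullback.lift_fst]
      using sq'.fac_right =≫ pullback.fst _ _⟩

lemma exists_lift_app_right [HasPushouts M] (sq : CommSq u i p v)
    [HasLiftingProperty (spanCofCorner i) (p.app right)] {lb : B.obj zero ⟶ X.obj zero}
    (hlb₁ : i.app zero ≫ lb = u.app zero) (hlb₂ : lb ≫ p.app zero = v.app zero) :
    ∃ lc, i.app right ≫ lc = u.app right ∧ lc ≫ p.app right = v.app right ∧
      B.map Hom.snd ≫ lc = lb ≫ X.map Hom.snd := by
  have sq' : CommSq
      (pushout.desc (u.app right) (lb ≫ X.map Hom.snd) (by simp [reassoc_of% hlb₁]))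
      (spanCofCorner i) (p.app right) (v.app right) := ⟨by
    apply pushout.hom_ext
    · simpa [spanCofCorner] using NatTrans.congr_app sq.w right
    · simp [spanCofCorner, reassoc_of% hlb₂]⟩
  exact ⟨sq'.lift,
    by simpa only [spanCofCorner, pushout.inl_desc_assoc, pushout.inl_desc]
      using pushout.inl _ _ ≫= sq'.fac_left,
    sq'.fac_right,
    by simpa only [spanCofCorner, pushout.inr_desc_assoc, pushout.inr_desc]
      using pushout.inr _ _ ≫= sq'.fac_left⟩

lemma hasLiftingProperty_of_corners [HasPushouts M] [HasPullbacks M] (i : A ⟶ B) (p : X ⟶ Y)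
    [HasLiftingProperty (i.app left) (p.app left)]
    [HasLiftingProperty (i.app zero) (spanFibCorner p)]
    [HasLiftingProperty (spanCofCorner i) (p.app right)] : HasLiftingProperty i p where
  sq_hasLift {u v} sq := by
    have sqa : CommSq (u.app left) (i.app left) (p.app left) (v.app left) :=
      sq.map ((evaluation _ _).obj left)
    obtain ⟨lb, hlb₁, hlb₂, hlb₃⟩ := exists_lift_app_zero sq sqa.fac_left sqa.fac_right
    obtain ⟨lc, hlc₁, hlc₂, hlc₃⟩ := exists_lift_app_right sq hlb₁ hlb₂
    refine ⟨⟨{ l := spanHomMk lb sqa.lift lc hlb₃.symm hlc₃,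
               fac_left := ?_, fac_right := ?_ }⟩⟩
    · ext (_ | _ | _)
      exacts [hlb₁, sqa.fac_left, hlc₁]
    · ext (_ | _ | _)
      exacts [hlb₂, sqa.fac_right, hlc₂]

end

lemma spanReedyCof_le_llp_spanReedyFib [HasPushouts M] [HasPullbacks M]
    {W₁ W₂ : MorphismProperty M} (h : W₁ ≤ W₂.llp) :
    W₁.spanReedyCof ≤ W₂.spanReedyFib.llp := fun _ _ i hi _ _ p hp =>
  have := h _ hi.1 _ hp.1
  have := h _ hi.2.1 _ hp.2.2
  have := h _ hi.2.2 _ hp.2.1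
  hasLiftingProperty_of_corners i p

section

variable [HasPushouts M] [HasPullbacks M] (W₁ W₂ : MorphismProperty M)
  [HasFactorization W₁ W₂] {X Y : WalkingSpan ⥤ M} (f : X ⟶ Y)

/- Factor `f_a` as `X_a → Z_a → Y_a`, then the map from `X_b` to the matching object
`Z_a ×_{Y_a} Y_b`, then the map from the latching object `X_c ⊔_{X_b} Z_b` to `Y_c`. -/
namespace SpanReedyFactorization

noncomputable def atLeft : MapFactorizationData W₁ W₂ (f.app left) :=
  factorizationData W₁ W₂ _

noncomputable def atZero : MapFactorizationData W₁ W₂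
    (pullback.lift (f := (atLeft W₁ W₂ f).p) (g := Y.map Hom.fst)
      (X.map Hom.fst ≫ (atLeft W₁ W₂ f).i) (f.app zero) (by simp)) :=
  factorizationData W₁ W₂ _

noncomputable def atRight : MapFactorizationData W₁ W₂
    (pushout.desc (f := X.map Hom.snd) (g := (atZero W₁ W₂ f).i) (f.app right)
      ((atZero W₁ W₂ f).p ≫ pullback.snd _ _ ≫ Y.map Hom.snd)
      (by simp [reassoc_of% (atZero W₁ W₂ f).fac])) :=
  factorizationData W₁ W₂ _

noncomputable def obj : WalkingSpan ⥤ M :=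
  span ((atZero W₁ W₂ f).p ≫ pullback.fst _ _) (pushout.inr _ _ ≫ (atRight W₁ W₂ f).i)

noncomputable def i : X ⟶ obj W₁ W₂ f :=
  spanHomMk (atZero W₁ W₂ f).i (atLeft W₁ W₂ f).i
    (pushout.inl _ _ ≫ (atRight W₁ W₂ f).i)
    (by simp [obj, reassoc_of% (atZero W₁ W₂ f).fac])
    (by simp [obj, pushout.condition_assoc])

noncomputable def p : obj W₁ W₂ f ⟶ Y :=
  spanHomMk ((atZero W₁ W₂ f).p ≫ pullback.snd _ _) (atLeft W₁ W₂ f).p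
    (atRight W₁ W₂ f).p
    (by simp [obj, pullback.condition])
    (by simp [obj])

lemma spanCofCorner_i : spanCofCorner (i W₁ W₂ f) = (atRight W₁ W₂ f).i := by
  apply pushout.hom_ext
  · rw [inl_spanCofCorner]
    rfl
  · rw [inr_spanCofCorner]
    rfl

lemma spanFibCorner_p : spanFibCorner (p W₁ W₂ f) = (atZero W₁ W₂ f).p := by
  apply pullback.hom_ext
  · rw [spanFibCorner_fst]
    rfl
  · rw [spanFibCorner_snd]
    rfl

lemma i_comp_p : i W₁ W₂ f ≫ p W₁ W₂ f = f := by
  ext (_ | _ | _)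
  · show (atZero W₁ W₂ f).i ≫ (atZero W₁ W₂ f).p ≫ pullback.snd _ _ = f.app zero
    rw [reassoc_of% (atZero W₁ W₂ f).fac, pullback.lift_snd]
  · exact (atLeft W₁ W₂ f).fac
  · show (pushout.inl _ _ ≫ (atRight W₁ W₂ f).i) ≫ (atRight W₁ W₂ f).p = f.app right
    rw [Category.assoc, (atRight W₁ W₂ f).fac, pushout.inl_desc]

end SpanReedyFactorization

open SpanReedyFactorization in
noncomputable def spanReedyFactorizationData :
    MapFactorizationData W₁.spanReedyCof W₂.spanReedyFib f where
  Z := obj W₁ W₂ f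
  i := i W₁ W₂ f
  p := p W₁ W₂ f
  fac := i_comp_p W₁ W₂ f
  hi := ⟨(atLeft W₁ W₂ f).hi, (atZero W₁ W₂ f).hi,
    spanCofCorner_i W₁ W₂ f ▸ (atRight W₁ W₂ f).hi⟩
  hp := ⟨(atLeft W₁ W₂ f).hp, (atRight W₁ W₂ f).hp,
    spanFibCorner_p W₁ W₂ f ▸ (atZero W₁ W₂ f).hp⟩

instance : HasFactorization W₁.spanReedyCof W₂.spanReedyFib :=
  ⟨fun f => ⟨spanReedyFactorizationData W₁ W₂ f⟩⟩

end

namespace ModelStructure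

variable (S : ModelStructure M)

lemma spanReedyCof_trivialCofibrations [HasPushouts M] :
    S.trivialCofibrations.spanReedyCof =
      S.Cof.spanReedyCof ⊓ S.W.functorCategory WalkingSpan := by
  ext X Y f
  constructor
  · rintro ⟨hl, hz, hc⟩
    have hinl := S.trivialCofibrations.pushout_inl (X.map Hom.snd) _ hz
    refine ⟨⟨hl.1, hz.1, hc.1⟩, ?_⟩
    rintro (_ | _ | _)
    · exact hz.2
    · exact hl.2
    · rw [← inl_spanCofCorner]
      exact (S.trivialCofibrations.comp_mem _ _ hinl hc).2
  · rintro ⟨⟨hl, hz, hc⟩, hW⟩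
    have hinl := S.trivialCofibrations.pushout_inl (X.map Hom.snd) _ ⟨hz, hW zero⟩
    refine ⟨⟨hl, hW left⟩, ⟨hz, hW zero⟩, hc, S.W.of_precomp _ _ hinl.2 ?_⟩
    rw [inl_spanCofCorner]
    exact hW right

lemma spanReedyFib_trivialFibrations [HasPullbacks M] :
    S.trivialFibrations.spanReedyFib =
      S.Fib.spanReedyFib ⊓ S.W.functorCategory WalkingSpan := by
  ext X Y p
  constructor
  · rintro ⟨hl, hr, hc⟩
    have hsnd := S.trivialFibrations.pullback_snd _ (Y.map Hom.fst) hl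
    refine ⟨⟨hl.1, hr.1, hc.1⟩, ?_⟩
    rintro (_ | _ | _)
    · rw [← spanFibCorner_snd]
      exact (S.trivialFibrations.comp_mem _ _ hc hsnd).2
    · exact hl.2
    · exact hr.2
  · rintro ⟨⟨hl, hr, hc⟩, hW⟩
    have hsnd := S.trivialFibrations.pullback_snd _ (Y.map Hom.fst) ⟨hl, hW left⟩
    refine ⟨⟨hl, hW left⟩, ⟨hr, hW right⟩, hc, S.W.of_postcomp _ _ hsnd.2 ?_⟩
    rw [spanFibCorner_snd]
    exact hW zero

end ModelStructure

lemma spanReedyCof_initial_to_iff [HasPushouts M] [HasInitial M] (P : MorphismProperty M)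
    [P.RespectsIso] (X : WalkingSpan ⥤ M) :
    P.spanReedyCof (initial.to X) ↔
      P (initial.to (X.obj left)) ∧ P (initial.to (X.obj zero)) ∧ P (X.map Hom.snd) := by
  have hI (j : WalkingSpan) : IsInitial ((⊥_ (WalkingSpan ⥤ M)).obj j) :=
    initialIsInitial.isInitialObj ((evaluation _ _).obj j) _
  have happ (j : WalkingSpan) : P ((initial.to X).app j) ↔ P (initial.to (X.obj j)) :=
    P.arrow_mk_iso_iff
      (Arrow.isoMk ((hI j).uniqueUpToIso initialIsInitial) (Iso.refl _) ((hI j).hom_ext _ _))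
  have : IsIso ((⊥_ (WalkingSpan ⥤ M)).map Hom.snd) := isIso_of_isInitial (hI _) (hI _) _
  have hcorner : P (spanCofCorner (initial.to X)) ↔ P (X.map Hom.snd) := by
    rw [← P.cancel_left_of_respectsIso (pushout.inr _ _) (spanCofCorner (initial.to X)),
      inr_spanCofCorner]
  rw [spanReedyCof, happ, happ, hcorner]

lemma spanReedyFib_const_map [HasPullbacks M] {P : MorphismProperty M} [P.ContainsIdentities]
    [P.RespectsIso] {x y : M} {p : x ⟶ y} (hp : P p) :
    P.spanReedyFib ((Functor.const WalkingSpan).map p) :=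
  ⟨hp, hp, have := isIso_spanFibCorner_const_map p; P.of_isIso _⟩

lemma colim_map_mem_llp [HasPushouts M] [HasPullbacks M] {W₁ W₂ : MorphismProperty M}
    [W₂.ContainsIdentities] [W₂.RespectsIso] (h : W₁ ≤ W₂.llp) {X Y : WalkingSpan ⥤ M}
    {f : X ⟶ Y} (hf : W₁.spanReedyCof f) : W₂.llp (colim.map f) := fun _ _ p hp =>
  (colimConstAdj.hasLiftingProperty_iff f p).2
    (spanReedyCof_le_llp_spanReedyFib h f hf _ (spanReedyFib_const_map hp))

noncomputable def ModelStructure.spanReedy [HasPushouts M] [HasPullbacks M]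
    (S : ModelStructure M) : ModelStructure (WalkingSpan ⥤ M) where
  W := S.W.functorCategory WalkingSpan
  Cof := S.Cof.spanReedyCof
  Fib := S.Fib.spanReedyFib
  iso_W := isomorphisms_le_of_containsIdentities _
  iso_Cof := isomorphisms_le_of_containsIdentities _
  iso_Fib := isomorphisms_le_of_containsIdentities _
  two_of_three := inferInstance
  retract_W := of_isRetract _
  retract_Cof := of_isRetract _
  retract_Fib := of_isRetract _
  lift_Cof_trivFib _ _ hi hW hF := spanReedyCof_le_llp_spanReedyFib
    S.cof_le_llp_trivialFibrations _ hi _ (S.spanReedyFib_trivialFibrations.ge _ ⟨hF, hW⟩)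
  lift_trivCof_Fib _ _ hi hW hF := spanReedyCof_le_llp_spanReedyFib
    S.trivialCofibrations_le_llp_fib _ (S.spanReedyCof_trivialCofibrations.ge _ ⟨hi, hW⟩) _ hF
  fact_Cof_trivFib f :=
    let h := factorizationData S.Cof.spanReedyCof S.trivialFibrations.spanReedyFib f
    have hp := S.spanReedyFib_trivialFibrations.le _ h.hp
    ⟨h.Z, h.i, h.p, h.hi, hp.2, hp.1, h.fac⟩
  fact_trivCof_Fib f :=
    let h := factorizationData S.trivialCofibrations.spanReedyCof S.Fib.spanReedyFib f
    have hi := S.spanReedyCof_trivialCofibrations.le _ h.hi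
    ⟨h.Z, h.i, h.p, hi.1, hi.2, h.hp, h.fac⟩

end Paper

section Statement16

open Paper

/-- **"Reedy trick".** Let `M` be a model category with pushouts and
pullbacks and let `J` be the walking span `a ← b → c`.  Then `Fun(J, M)` admits a model
structure with: weak equivalences the componentwise ones; cofibrations the maps `f` with
`f_a`, `f_b` cofibrations and the corner map `X_c ⊔_{X_b} Y_b → Y_c` a cofibration;
fibrations the maps `f` with `f_a`, `f_c` fibrations and `X_b → X_a ×_{Y_a} Y_b` a
fibration.  Moreover an object is cofibrant iff `X_a`, `X_b` are cofibrant and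
`X_b → X_c` is a cofibration, the constant functor preserves fibrations and trivial
fibrations, and `colim ⊣ const` is a Quillen adjunction. -/
theorem reedy_trick_walking_span
    {M : Type u} [Category.{v} M] [HasPushouts M] [HasPullbacks M] [HasInitial M]
    (S : ModelStructure M) :
    ∃ T : ModelStructure (WalkingSpan ⥤ M),
      (∀ {X Y : WalkingSpan ⥤ M} (f : X ⟶ Y), T.W f ↔ ∀ j, S.W (f.app j)) ∧
      (∀ {X Y : WalkingSpan ⥤ M} (f : X ⟶ Y), T.Cof f ↔
        (S.Cof (f.app WalkingSpan.left) ∧ S.Cof (f.app WalkingSpan.zero) ∧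
          S.Cof (spanCofCorner f))) ∧
      (∀ {X Y : WalkingSpan ⥤ M} (f : X ⟶ Y), T.Fib f ↔
        (S.Fib (f.app WalkingSpan.left) ∧ S.Fib (f.app WalkingSpan.right) ∧
          S.Fib (spanFibCorner f))) ∧
      (∀ X : WalkingSpan ⥤ M, T.Cofibrant X ↔
        (S.Cofibrant (X.obj WalkingSpan.left) ∧ S.Cofibrant (X.obj WalkingSpan.zero) ∧
          S.Cof (X.map WalkingSpan.Hom.snd))) ∧
      (∀ {x y : M} (p : x ⟶ y), S.Fib p →
        T.Fib ((Functor.const WalkingSpan).map p)) ∧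
      (∀ {x y : M} (p : x ⟶ y), S.Fib p → S.W p →
        T.Fib ((Functor.const WalkingSpan).map p) ∧
        T.W ((Functor.const WalkingSpan).map p)) ∧
      (∀ {X Y : WalkingSpan ⥤ M} (f : X ⟶ Y), T.Cof f →
        S.Cof ((colim (J := WalkingSpan) (C := M)).map f)) ∧
      (∀ {X Y : WalkingSpan ⥤ M} (f : X ⟶ Y), T.Cof f → T.W f →
        S.Cof ((colim (J := WalkingSpan) (C := M)).map f) ∧
        S.W ((colim (J := WalkingSpan) (C := M)).map f)) := by
  refine ⟨S.spanReedy, fun _ => Iff.rfl, fun _ => Iff.rfl, fun _ => Iff.rfl,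
    spanReedyCof_initial_to_iff S.Cof, fun _ hp => spanReedyFib_const_map hp,
    fun _ hp hW => ⟨spanReedyFib_const_map hp, fun _ => hW⟩,
    fun _ hf => ?_, fun _ hf hW => ?_⟩
  · rw [← S.llp_trivialFibrations]
    exact colim_map_mem_llp S.cof_le_llp_trivialFibrations hf
  · have := colim_map_mem_llp S.trivialCofibrations_le_llp_fib
      (S.spanReedyCof_trivialCofibrations.ge _ ⟨hf, hW⟩)
    rwa [S.llp_fib] at this

end Statement16
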